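/- arXiv:1210.1818 — 5 statements merged into one kernel-verified Lean document; each statement's English description precedes it below -/
import Mathlib

section
/- For any commutative ring k and commutative nonunitary k-algebra A, the mixable shuffle product of weight λ on T(A), defined recursively by 𝔞 * 𝔟 = a₁⊗((a₂⊗…⊗aₖ) * 𝔟) + b₁⊗(𝔞 * (b₂⊗…⊗b_ℓ)) + λ(a₁b₁)⊗((a₂⊗…⊗aₖ) * (b₂⊗…⊗b_ℓ)), is associative and commutative. -/
variable {k : Type*} [CommRing k]
variable {A : Type*} [NonUnitalCommRing A] [Module k A]
  [SMulCommClass k A A] [IsScalarTower k A A]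

/-- The mixable shuffle product of weight `λ` on words over a commutative
(not necessarily unitary) `k`-algebra `A`, with values in the free `k`-module
on words, defined by the recursion
`𝔞 * 𝔟 = a₁⊗((a₂⊗…⊗aₖ) * 𝔟) + b₁⊗(𝔞 * (b₂⊗…⊗b_ℓ)) + λ(a₁b₁)⊗((a₂⊗…⊗aₖ) * (b₂⊗…⊗b_ℓ))`. -/
noncomputable def mixShuf (lam : k) : List A → List A → (List A →₀ k)
  | [], l => Finsupp.single l 1
  | a :: as, [] => Finsupp.single (a :: as) 1
  | a :: as, b :: bs =>
      Finsupp.mapDomain (a :: ·) (mixShuf lam as (b :: bs))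
      + Finsupp.mapDomain (b :: ·) (mixShuf lam (a :: as) bs)
      + lam • Finsupp.mapDomain ((a * b) :: ·) (mixShuf lam as bs)
  termination_by x y => x.length + y.length

/-!
Write `F ⧢ t` for the linear extension of `mixShuf lam · t`. Given commutativity, associativity
is the rotation invariance `(u ⧢ v) ⧢ t = (v ⧢ t) ⧢ u`. Applying the recursion twice expands
`(a·as ⧢ b·bs) ⧢ c·cs` into seven terms: the letters `a, b, c, ab, ac, bc, abc`, weighted by
`1`, `λ` or `λ²`, each prepended to a triple product of shorter words. Rotating `(a, b, c)` only
permutes these terms, so rotation invariance follows by induction on the total length.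
-/

section

variable {k : Type*} [CommRing k] {A : Type*} [NonUnitalCommRing A]

theorem mixShuf_nil_left (lam : k) (v : List A) : mixShuf lam [] v = Finsupp.single v 1 := by
  rw [mixShuf]

theorem mixShuf_nil_right (lam : k) (u : List A) : mixShuf lam u [] = Finsupp.single u 1 := by
  cases u <;> rw [mixShuf]

theorem mixShuf_cons_cons (lam : k) (a b : A) (as bs : List A) :
    mixShuf lam (a :: as) (b :: bs) =
      Finsupp.mapDomain (a :: ·) (mixShuf lam as (b :: bs))
      + Finsupp.mapDomain (b :: ·) (mixShuf lam (a :: as) bs)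
      + lam • Finsupp.mapDomain ((a * b) :: ·) (mixShuf lam as bs) := by
  rw [mixShuf]

theorem mixShuf_comm (lam : k) : ∀ u v : List A, mixShuf lam u v = mixShuf lam v u
  | [], v => by rw [mixShuf_nil_left, mixShuf_nil_right]
  | a :: as, [] => by rw [mixShuf_nil_left, mixShuf_nil_right]
  | a :: as, b :: bs => by
    rw [mixShuf_cons_cons, mixShuf_cons_cons, mixShuf_comm lam as (b :: bs),
      mixShuf_comm lam (a :: as) bs, mixShuf_comm lam as bs, mul_comm a b,
      add_comm (Finsupp.mapDomain _ _)]

noncomputable def mixShufRight (lam : k) (t : List A) : (List A →₀ k) →ₗ[k] (List A →₀ k) :=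
  Finsupp.linearCombination k (mixShuf lam · t)

theorem mixShufRight_single (lam : k) (t w : List A) (r : k) :
    mixShufRight lam t (Finsupp.single w r) = r • mixShuf lam w t :=
  Finsupp.linearCombination_single ..

theorem mixShufRight_nil (lam : k) (F : List A →₀ k) : mixShufRight lam [] F = F := by
  induction F using Finsupp.induction_linear with
  | zero => exact map_zero _
  | add F G hF hG => rw [map_add, hF, hG]
  | single w r => rw [mixShufRight_single, mixShuf_nil_right, Finsupp.smul_single_one]

theorem mixShufRight_mapDomain_cons (lam : k) (x c : A) (cs : List A) (F : List A →₀ k) :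
    mixShufRight lam (c :: cs) (F.mapDomain (x :: ·)) =
      (mixShufRight lam (c :: cs) F).mapDomain (x :: ·)
      + (mixShufRight lam cs (F.mapDomain (x :: ·))).mapDomain (c :: ·)
      + lam • (mixShufRight lam cs F).mapDomain ((x * c) :: ·) := by
  induction F using Finsupp.induction_linear with
  | zero => simp
  | add F G hF hG =>
    simp only [Finsupp.mapDomain_add, map_add, hF, hG, smul_add]
    abel
  | single w r =>
    simp only [Finsupp.mapDomain_single, mixShufRight_single, mixShuf_cons_cons,
      Finsupp.mapDomain_smul, smul_add, smul_comm r lam]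

theorem mixShufRight_mixShuf_cons_cons (lam : k) (a b c : A) (as bs cs : List A) :
    mixShufRight lam (c :: cs) (mixShuf lam (a :: as) (b :: bs)) =
      (mixShufRight lam (c :: cs) (mixShuf lam as (b :: bs))).mapDomain (a :: ·)
      + (mixShufRight lam (c :: cs) (mixShuf lam (a :: as) bs)).mapDomain (b :: ·)
      + (mixShufRight lam cs (mixShuf lam (a :: as) (b :: bs))).mapDomain (c :: ·)
      + lam • (mixShufRight lam cs (mixShuf lam as (b :: bs))).mapDomain ((a * c) :: ·)
      + lam • (mixShufRight lam cs (mixShuf lam (a :: as) bs)).mapDomain ((b * c) :: ·)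
      + lam • (mixShufRight lam (c :: cs) (mixShuf lam as bs)).mapDomain ((a * b) :: ·)
      + (lam * lam) • (mixShufRight lam cs (mixShuf lam as bs)).mapDomain ((a * b * c) :: ·) := by
  rw [mixShuf_cons_cons]
  simp only [map_add, map_smul, mixShufRight_mapDomain_cons, Finsupp.mapDomain_add,
    Finsupp.mapDomain_smul, smul_add, smul_smul]
  abel

theorem mixShufRight_mixShuf_rotate (lam : k) (u v t : List A) :
    mixShufRight lam t (mixShuf lam u v) = mixShufRight lam u (mixShuf lam v t) := by
  match u, v, t with
  | [], v, t => rw [mixShuf_nil_left, mixShufRight_single, one_smul, mixShufRight_nil]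
  | u, [], t => rw [mixShuf_nil_left, mixShuf_nil_right, mixShufRight_single,
      mixShufRight_single, mixShuf_comm]
  | u, v, [] => rw [mixShuf_nil_right, mixShufRight_nil, mixShufRight_single, one_smul,
      mixShuf_comm]
  | a :: as, b :: bs, c :: cs =>
    rw [mixShufRight_mixShuf_cons_cons, mixShufRight_mixShuf_cons_cons,
      mixShufRight_mixShuf_rotate lam as (b :: bs) (c :: cs),
      mixShufRight_mixShuf_rotate lam (a :: as) bs (c :: cs),
      mixShufRight_mixShuf_rotate lam (a :: as) (b :: bs) cs,
      mixShufRight_mixShuf_rotate lam as (b :: bs) cs,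
      mixShufRight_mixShuf_rotate lam (a :: as) bs cs,
      mixShufRight_mixShuf_rotate lam as bs (c :: cs),
      mixShufRight_mixShuf_rotate lam as bs cs,
      mul_comm b a, mul_comm c a, ← mul_rotate a b c]
    abel
termination_by u.length + v.length + t.length

end

/-- The mixable shuffle product of weight `λ` is commutative and associative
(associativity stated on pure tensors, extended bilinearly via `Finsupp.sum`). -/
theorem mixShuf_comm_assoc (lam : k) (u v t : List A) :
    mixShuf lam u v = mixShuf lam v u ∧
    (mixShuf lam u v).sum (fun w c => c • mixShuf lam w t) =
      (mixShuf lam v t).sum (fun w c => c • mixShuf lam u w) := by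
  refine ⟨mixShuf_comm lam u v, ?_⟩
  have rotate := mixShufRight_mixShuf_rotate lam u v t
  simp only [mixShufRight, Finsupp.linearCombination_apply] at rotate
  rw [rotate]
  exact Finsupp.sum_congr fun w _ => by rw [mixShuf_comm lam w u]
end

section
/- The nonunitary shuffle algebra ℌ¹ш,0 = ℚ⟨x₀,x₁⟩x₁ (words ending in x₁, with shuffle product), equipped with the left-multiplication operator I₀(w) = x₀w, is generated by x₁ as a nonunitary Rota-Baxter algebra: the smallest subspace containing x₁ and closed under shuffle product and I₀ is all of ℚ⟨x₀,x₁⟩x₁. -/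
/-- Word-level shuffle product on `ℚ⟨x₀,x₁⟩` (words over `Bool`, `x₀ = false`,
`x₁ = true`). -/
noncomputable def shq : List Bool → List Bool → (List Bool →₀ ℚ)
  | [], l => Finsupp.single l 1
  | a :: as, [] => Finsupp.single (a :: as) 1
  | a :: as, b :: bs =>
      Finsupp.mapDomain (a :: ·) (shq as (b :: bs))
      + Finsupp.mapDomain (b :: ·) (shq (a :: as) bs)
  termination_by x y => x.length + y.length

/-- The bilinear extension of `shq` to the shuffle algebra `ℚ⟨x₀,x₁⟩`. -/
noncomputable def shMulF (f g : List Bool →₀ ℚ) : List Bool →₀ ℚ :=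
  f.sum fun u a => g.sum fun v b => (a * b) • shq u v

/-!
Induct on the length of a word and, within one length, on the number `j` of its leading `x₁`s.
A word `x₀ r` is `I₀ r`, and `x₁ᵏ⁺¹` comes from `x₁ ш x₁ᵏ = (k + 1) x₁ᵏ⁺¹`. For `x₁ʲ⁺¹ x₀ r`,
inserting the letter `x₁` into `x₁ʲ x₀ r` gives
  `x₁ ш x₁ʲ x₀ r = (j + 1) x₁ʲ⁺¹ x₀ r + x₁ʲ x₀ (x₁ ш r)`,
where `x₁ʲ x₀ r` is shorter, and every word of the last term has the same length as `x₁ʲ⁺¹ x₀ r`,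
still ends in `x₁`, but has only `j` leading `x₁`s.
-/

open Finsupp List

theorem Finsupp.mem_of_forall_single_one_mem {α R : Type*} [Semiring R]
    {S : Submodule R (α →₀ R)} {f : α →₀ R} (h : ∀ a ∈ f.support, single a 1 ∈ S) : f ∈ S := by
  rw [← f.sum_single]
  refine Submodule.sum_mem _ fun a ha => ?_
  simpa using S.smul_mem (f a) (h a ha)

theorem List.getLastD_eq_getLastD_of_ne_nil {α : Type*} {l : List α} (h : l ≠ []) (a b : α) :
    l.getLastD a = l.getLastD b := by
  simp [getLast?_eq_some_getLast h]

theorem List.getLastD_append_cons {α : Type*} (l rest : List α) (a d : α) :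
    (l ++ a :: rest).getLastD d = rest.getLastD a := by
  simp [getLast?_cons]

theorem List.getLastD_of_getLastD_cons {α : Type*} {a c : α} {l : List α}
    (h : (a :: l).getLastD c = c) : l.getLastD c = c := by
  rcases eq_or_ne l [] with rfl | hl
  · rfl
  · simpa [getLast?_eq_some_getLast hl, getLast?_cons] using h

theorem List.getLastD_cons_of_ne_nil {α : Type*} {a d : α} {l : List α} (hl : l ≠ []) :
    (a :: l).getLastD d = l.getLastD d := by
  simp [getLast?_eq_some_getLast hl, getLast?_cons]

theorem List.eq_replicate_or_eq_replicate_append_cons_of_ne {α : Type*} (l : List α) (a : α) :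
    (∃ k, l = replicate k a) ∨ ∃ j b rest, b ≠ a ∧ l = replicate j a ++ b :: rest := by
  induction l with
  | nil => exact .inl ⟨0, rfl⟩
  | cons b t ih =>
    by_cases hb : b = a
    · subst hb
      rcases ih with ⟨k, rfl⟩ | ⟨j, c, rest, hc, rfl⟩
      · exact .inl ⟨k + 1, rfl⟩
      · exact .inr ⟨j + 1, c, rest, hc, rfl⟩
    · exact .inr ⟨0, b, t, hb, rfl⟩

theorem shMulF_single_one (u v : List Bool) :
    shMulF (single u 1) (single v 1) = shq u v := by
  simp [shMulF, sum_single_index]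

theorem shq_singleton_nil (a : Bool) : shq [a] [] = single [a] 1 := by
  rw [shq]

theorem shq_singleton_cons (a b : Bool) (l : List Bool) :
    shq [a] (b :: l) = single (a :: b :: l) 1 + mapDomain (b :: ·) (shq [a] l) := by
  rw [shq, shq, mapDomain_single]

theorem mem_support_shq_cons_cons {a b : Bool} {u v w : List Bool}
    (hw : w ∈ (shq (a :: u) (b :: v)).support) :
    (∃ w' ∈ (shq u (b :: v)).support, w = a :: w') ∨
      ∃ w' ∈ (shq (a :: u) v).support, w = b :: w' := by
  classical
  rw [shq] at hw
  rcases Finset.mem_union.1 (support_add hw) with h | h <;>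
    obtain ⟨w', hw', rfl⟩ := Finset.mem_image.1 (mapDomain_support h)
  exacts [.inl ⟨w', hw', rfl⟩, .inr ⟨w', hw', rfl⟩]

theorem length_of_mem_support_shq {u v w : List Bool} (hw : w ∈ (shq u v).support) :
    w.length = u.length + v.length := by
  induction u, v using shq.induct generalizing w with
  | case1 v =>
    rw [shq] at hw
    simp_all
  | case2 a u =>
    rw [shq] at hw
    simp_all
  | case3 a u b v ih₁ ih₂ =>
    rcases mem_support_shq_cons_cons hw with ⟨w', hw', rfl⟩ | ⟨w', hw', rfl⟩
    · simp only [length_cons, ih₁ hw']; omega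
    · simp only [length_cons, ih₂ hw']; omega

-- `l.getLastD c = c` says that `l` is empty or ends in `c`, an invariant of the recursion of `shq`.
theorem getLastD_of_mem_support_shq {u v w : List Bool} {c : Bool} (hu : u.getLastD c = c)
    (hv : v.getLastD c = c) (hw : w ∈ (shq u v).support) : w.getLastD c = c := by
  induction u, v using shq.induct generalizing w with
  | case1 v =>
    rw [shq] at hw
    simp_all
  | case2 a u =>
    rw [shq] at hw
    simp_all
  | case3 a u b v ih₁ ih₂ =>
    rcases mem_support_shq_cons_cons hw with ⟨w', hw', rfl⟩ | ⟨w', hw', rfl⟩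
    · have hw'_ne : w' ≠ [] := ne_nil_of_length_pos (by simp [length_of_mem_support_shq hw'])
      rw [getLastD_cons_of_ne_nil hw'_ne]
      exact ih₁ (getLastD_of_getLastD_cons hu) hv hw'
    · have hw'_ne : w' ≠ [] := ne_nil_of_length_pos (by simp [length_of_mem_support_shq hw'])
      rw [getLastD_cons_of_ne_nil hw'_ne]
      exact ih₂ hu (getLastD_of_getLastD_cons hv) hw'

theorem shq_singleton_replicate_append (a : Bool) (j : ℕ) (l : List Bool) :
    shq [a] (replicate j a ++ l) = (j : ℚ) • single (replicate (j + 1) a ++ l) 1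
      + mapDomain (replicate j a ++ ·) (shq [a] l) := by
  induction j with
  | zero =>
    simp only [replicate_zero, nil_append, Nat.cast_zero, zero_smul, zero_add]
    exact (mapDomain_id (M := ℚ)).symm
  | succ j ih =>
    rw [replicate_succ, cons_append, shq_singleton_cons, ih, mapDomain_add, mapDomain_smul,
      mapDomain_single, ← mapDomain_comp]
    have hw : a :: a :: (replicate j a ++ l) = replicate (j + 1 + 1) a ++ l := rfl
    have hw' : a :: (replicate (j + 1) a ++ l) = replicate (j + 1 + 1) a ++ l := rfl
    rw [hw, hw']
    simp only [Function.comp_def, cons_append]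
    push_cast
    module

theorem shq_singleton_replicate (a : Bool) (j : ℕ) :
    shq [a] (replicate j a) = ((j : ℚ) + 1) • single (replicate (j + 1) a) 1 := by
  have h := shq_singleton_replicate_append a j []
  rw [shq_singleton_nil, mapDomain_single, append_nil, append_nil, ← replicate_succ'] at h
  rw [h]
  module

theorem shq_singleton_replicate_append_cons (a b : Bool) (j : ℕ) (l : List Bool) :
    shq [a] (replicate j a ++ b :: l) = ((j : ℚ) + 1) • single (replicate (j + 1) a ++ b :: l) 1
      + mapDomain (replicate j a ++ b :: ·) (shq [a] l) := by
  rw [shq_singleton_replicate_append, shq_singleton_cons, mapDomain_add, mapDomain_single,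
    ← mapDomain_comp]
  have hw : replicate j a ++ a :: b :: l = replicate (j + 1) a ++ b :: l := by
    simp [replicate_succ']
  rw [hw]
  simp only [Function.comp_def]
  module

section Generation

variable {S : Submodule ℚ (List Bool →₀ ℚ)}

theorem single_replicate_true_mem (hx1 : single [true] (1 : ℚ) ∈ S)
    (hmul : ∀ f g : List Bool →₀ ℚ, f ∈ S → g ∈ S → shMulF f g ∈ S) (k : ℕ) :
    single (replicate (k + 1) true) (1 : ℚ) ∈ S := by
  induction k with
  | zero => exact hx1
  | succ k ih =>
    have h := hmul _ _ hx1 ih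
    rwa [shMulF_single_one, shq_singleton_replicate, S.smul_mem_iff (by positivity)] at h

theorem single_replicate_true_append_false_cons_mem (hx1 : single [true] (1 : ℚ) ∈ S)
    (hmul : ∀ f g : List Bool →₀ ℚ, f ∈ S → g ∈ S → shMulF f g ∈ S)
    (hI0 : ∀ f : List Bool →₀ ℚ, f ∈ S → mapDomain (false :: ·) f ∈ S) {n : ℕ}
    (ih : ∀ w : List Bool, w.length < n → w.getLastD false = true → single w (1 : ℚ) ∈ S)
    (j : ℕ) (rest : List Bool) (hlen : (replicate j true ++ false :: rest).length = n)
    (hrest : rest.getLastD false = true) :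
    single (replicate j true ++ false :: rest) (1 : ℚ) ∈ S := by
  induction j generalizing rest with
  | zero =>
    simpa [mapDomain_single] using hI0 _ (ih rest (by simp at hlen; omega) hrest)
  | succ j ihj =>
    have hv := ih (replicate j true ++ false :: rest) (by simp at hlen ⊢; omega)
      (by rwa [getLastD_append_cons])
    have hprod := hmul _ _ hx1 hv
    rw [shMulF_single_one, shq_singleton_replicate_append_cons] at hprod
    have hrest_ne : rest ≠ [] := by rintro rfl; simp at hrest
    have hrem : mapDomain (replicate j true ++ false :: ·) (shq [true] rest) ∈ S := by
      classical
      refine mem_of_forall_single_one_mem fun w hw => ?_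
      obtain ⟨u, hu, rfl⟩ := Finset.mem_image.1 (mapDomain_support hw)
      have hu_len := length_of_mem_support_shq hu
      have hu_last := getLastD_of_mem_support_shq rfl
        (by rwa [getLastD_eq_getLastD_of_ne_nil hrest_ne]) hu
      refine ihj u (by simp [hu_len] at hlen ⊢; omega) ?_
      rwa [getLastD_eq_getLastD_of_ne_nil (ne_nil_of_length_pos (by simp [hu_len]))]
    have hw := S.sub_mem hprod hrem
    rwa [add_sub_cancel_right, S.smul_mem_iff (by positivity)] at hw

end Generation

/-- The nonunitary shuffle algebra `ℚ⟨x₀,x₁⟩x₁` (span of words ending in `x₁`),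
with the operator `I₀(w) = x₀w`, is generated by `x₁` as a nonunitary Rota-Baxter
algebra: any subspace containing `x₁` and closed under the shuffle product and
`I₀` contains every word ending in `x₁`. -/
theorem H1_generated_by_x1 (S : Submodule ℚ (List Bool →₀ ℚ))
    (hx1 : Finsupp.single [true] (1 : ℚ) ∈ S)
    (hmul : ∀ f g : List Bool →₀ ℚ, f ∈ S → g ∈ S → shMulF f g ∈ S)
    (hI0 : ∀ f : List Bool →₀ ℚ, f ∈ S → Finsupp.mapDomain (false :: ·) f ∈ S) :
    ∀ w : List Bool, w.getLastD false = true → Finsupp.single w (1 : ℚ) ∈ S := by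
  suffices ∀ n (w : List Bool), w.length = n → w.getLastD false = true → single w (1 : ℚ) ∈ S from
    fun w => this _ w rfl
  refine fun n => Nat.strong_induction_on n fun n ih w hlen hw => ?_
  rcases eq_replicate_or_eq_replicate_append_cons_of_ne w true with
    ⟨k, rfl⟩ | ⟨j, b, rest, hb, rfl⟩
  · cases k with
    | zero => simp at hw
    | succ k => exact single_replicate_true_mem hx1 hmul k
  · obtain rfl : b = false := by simpa using hb
    exact single_replicate_true_append_false_cons_mem hx1 hmul hI0
      (fun v hv => ih _ (hlen ▸ hv) v rfl) j rest hlen (by rwa [getLastD_append_cons] at hw)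
end

section
/- There is a unique extension of the shuffle product from ℌ≥1 (spans of tuples of positive integers) to a commutative associative product ш* on ℌ≥0 (spans of tuples of nonnegative integers) such that [0] ш* [s⃗] = [0, s⃗] for all tuples s⃗, and such that the shift operator I([s⃗]) = [s⃗ + e⃗₁] (adding 1 to the first entry) is a Rota-Baxter operator of weight 0. -/
/-- `[s₁,…,sₖ] ↦ x₀^{s₁−1}x₁⋯x₀^{sₖ−1}x₁`, the correspondence between tuples of
positive integers and words ending in `x₁`. -/
def wordOf' (s : List ℕ) : List Bool :=
  (s.map fun n => List.replicate (n - 1) false ++ [true]).flatten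

/-- Inverse correspondence: a word ending in `x₁` gives a tuple of positive
integers. -/
def toTuple : List Bool → List ℕ
  | [] => []
  | false :: w =>
      match toTuple w with
      | [] => []
      | s :: t => (s + 1) :: t
  | true :: w => 1 :: toTuple w

/-- `I` adds 1 to the first entry of a tuple. -/
def incFirst : List ℕ → List ℕ
  | [] => []
  | a :: t => (a + 1) :: t

/-- Basis vector of `ℌ≥0` corresponding to a tuple. -/
noncomputable def E (s : List ℕ) : List ℕ →₀ ℚ := Finsupp.single s 1

/-- `GoodMul mul` says that the bilinear product `mul` on `ℌ≥0` (the span of the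
nonempty tuples of nonnegative integers) is a commutative associative extension of
the shuffle product of `ℌ≥1` (transported from the word shuffle) satisfying
`[0] ш* [s⃗] = [0,s⃗]`, for which the shift `I` is a Rota-Baxter operator of
weight 0. -/
def GoodMul (mul : (List ℕ →₀ ℚ) →ₗ[ℚ] (List ℕ →₀ ℚ) →ₗ[ℚ] (List ℕ →₀ ℚ)) : Prop :=
  (∀ s t : List ℕ, s ≠ [] → t ≠ [] → (∀ x ∈ s, 1 ≤ x) → (∀ x ∈ t, 1 ≤ x) →
      mul (E s) (E t) = Finsupp.mapDomain toTuple (shq (wordOf' s) (wordOf' t))) ∧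
  (∀ s t : List ℕ, s ≠ [] → t ≠ [] → mul (E s) (E t) = mul (E t) (E s)) ∧
  (∀ s t u : List ℕ, s ≠ [] → t ≠ [] → u ≠ [] →
      mul (mul (E s) (E t)) (E u) = mul (E s) (mul (E t) (E u))) ∧
  (∀ s : List ℕ, s ≠ [] → mul (E [0]) (E s) = E (0 :: s)) ∧
  (∀ s t : List ℕ, s ≠ [] → t ≠ [] →
      mul (Finsupp.mapDomain incFirst (E s)) (Finsupp.mapDomain incFirst (E t)) =
        Finsupp.mapDomain incFirst (mul (E s) (Finsupp.mapDomain incFirst (E t))) +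
        Finsupp.mapDomain incFirst (mul (Finsupp.mapDomain incFirst (E s)) (E t)))

/-!
The rule `[0] ш* [s⃗] = [0, s⃗]` together with associativity and commutativity forces
`[0, s⃗'] ш* [t⃗] = [0, s⃗' ш* t⃗]` and `[s⃗] ш* [0, t⃗'] = [0, s⃗ ш* t⃗']`, and the Rota–Baxter
identity forces the recursion for two positive first entries. Induction on the weight
(length plus sum of entries) therefore gives uniqueness, and the same recursion defines the
product `shuffleStar` on basis tuples. Commutativity is immediate from the symmetric recursion.
Associativity also goes by induction on the weight: for a Rota–Baxter operator `I` of weight 0,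
associativity at `(x, Iy, Iz)`, `(Ix, y, Iz)` and `(Ix, Iy, z)` implies it at `(Ix, Iy, Iz)`.
Finally, read letter by letter, `toTuple` turns `x₀` into `I` and `x₁` into `I ∘ [0, ·]`, so it
carries the recursion of the word shuffle onto that of `ш*`.
-/

open Finsupp

theorem LinearMap.assoc_of_rotaBaxter {R V : Type*} [CommSemiring R] [AddCommMonoid V] [Module R V]
    (B : V →ₗ[R] V →ₗ[R] V) (P : V →ₗ[R] V) (W : Submodule R V)
    (hB : ∀ X ∈ W, ∀ Y ∈ W, B X Y ∈ W) (hP : ∀ X ∈ W, P X ∈ W)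
    (hRB : ∀ X ∈ W, ∀ Y ∈ W, B (P X) (P Y) = P (B X (P Y)) + P (B (P X) Y))
    {x y z : V} (hx : x ∈ W) (hy : y ∈ W) (hz : z ∈ W)
    (h₁ : B (B x (P y)) (P z) = B x (B (P y) (P z)))
    (h₂ : B (B (P x) y) (P z) = B (P x) (B y (P z)))
    (h₃ : B (B (P x) (P y)) z = B (P x) (B (P y) z)) :
    B (B (P x) (P y)) (P z) = B (P x) (B (P y) (P z)) := by
  have hxy := hB _ hx _ (hP _ hy)
  have hxy' := hB _ (hP _ hx) _ hy
  have hyz := hB _ hy _ (hP _ hz)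
  have hyz' := hB _ (hP _ hy) _ hz
  have h₃' : B (P (B x (P y))) z + B (P (B (P x) y)) z = B (P x) (B (P y) z) := by
    rw [← h₃, hRB x hx y hy, map_add, LinearMap.add_apply]
  have h₁' : B x (P (B y (P z))) + B x (P (B (P y) z)) = B x (B (P y) (P z)) := by
    rw [hRB y hy z hz, map_add]
  rw [hRB x hx y hy, hRB y hy z hz, map_add, LinearMap.add_apply, map_add,
    hRB _ hxy z hz, hRB _ hxy' z hz, hRB x hx _ hyz, hRB x hx _ hyz', h₁, h₂, ← h₃', ← h₁',
    map_add, map_add]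
  abel

local notation "𝔥" => List ℕ →₀ ℚ

local notation "I" => lmapDomain ℚ ℚ incFirst

/-- The empty tuple acts as a unit; it lies outside `ℌ≥0` and only serves the recursion. -/
noncomputable def shuffleStar : List ℕ → List ℕ → 𝔥
  | [], t => E t
  | a :: s, [] => E (a :: s)
  | 0 :: s, b :: t => mapDomain (0 :: ·) (shuffleStar s (b :: t))
  | (a + 1) :: s, 0 :: t => mapDomain (0 :: ·) (shuffleStar ((a + 1) :: s) t)
  | (a + 1) :: s, (b + 1) :: t =>
      mapDomain incFirst (shuffleStar (a :: s) ((b + 1) :: t))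
      + mapDomain incFirst (shuffleStar ((a + 1) :: s) (b :: t))
  termination_by s t => (s.length + t.length, s.headI + t.headI)

theorem mapDomain_E (f : List ℕ → List ℕ) (s : List ℕ) : mapDomain f (E s) = E (f s) :=
  mapDomain_single

theorem shuffleStar_nil_left (t : List ℕ) : shuffleStar [] t = E t := by
  rw [shuffleStar]

theorem shuffleStar_nil_right (s : List ℕ) : shuffleStar s [] = E s := by
  cases s <;> rw [shuffleStar]

theorem shuffleStar_zero_left (s t : List ℕ) :
    shuffleStar (0 :: s) t = mapDomain (0 :: ·) (shuffleStar s t) := by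
  cases t with
  | nil => rw [shuffleStar_nil_right, shuffleStar_nil_right, mapDomain_E]
  | cons b t => rw [shuffleStar]

theorem shuffleStar_zero_right (s t : List ℕ) :
    shuffleStar s (0 :: t) = mapDomain (0 :: ·) (shuffleStar s t) := by
  induction s with
  | nil => rw [shuffleStar_nil_left, shuffleStar_nil_left, mapDomain_E]
  | cons a s ih =>
    cases a with
    | zero => rw [shuffleStar_zero_left, shuffleStar_zero_left, ih]
    | succ a => rw [shuffleStar]

theorem shuffleStar_succ_succ (a : ℕ) (s : List ℕ) (b : ℕ) (t : List ℕ) :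
    shuffleStar ((a + 1) :: s) ((b + 1) :: t) =
      mapDomain incFirst (shuffleStar (a :: s) ((b + 1) :: t))
      + mapDomain incFirst (shuffleStar ((a + 1) :: s) (b :: t)) := by
  rw [shuffleStar]

theorem shuffleStar_incFirst {s t : List ℕ} (hs : s ≠ []) (ht : t ≠ []) :
    shuffleStar (incFirst s) (incFirst t) =
      mapDomain incFirst (shuffleStar s (incFirst t))
      + mapDomain incFirst (shuffleStar (incFirst s) t) := by
  obtain ⟨a, s, rfl⟩ := List.exists_cons_of_ne_nil hs
  obtain ⟨b, t, rfl⟩ := List.exists_cons_of_ne_nil ht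
  exact shuffleStar_succ_succ a s b t

theorem shuffleStar_comm (s t : List ℕ) : shuffleStar s t = shuffleStar t s := by
  induction s, t using shuffleStar.induct with
  | case1 t => rw [shuffleStar_nil_left, shuffleStar_nil_right]
  | case2 a s => rw [shuffleStar_nil_left, shuffleStar_nil_right]
  | case3 s b t ih => rw [shuffleStar_zero_left, shuffleStar_zero_right, ih]
  | case4 a s t ih => rw [shuffleStar_zero_left, shuffleStar_zero_right, ih]
  | case5 a s b t ih₁ ih₂ =>
    rw [shuffleStar_succ_succ, shuffleStar_succ_succ, ih₁, ih₂, add_comm]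

/-- The space `ℌ≥0` of the paper. -/
abbrev H0 : Submodule ℚ 𝔥 := supported ℚ ℚ {s | s ≠ []}

theorem E_mem_H0 {s : List ℕ} (hs : s ≠ []) : E s ∈ H0 :=
  single_mem_supported ℚ 1 hs

theorem mapDomain_mem_H0 {f : List ℕ → List ℕ} {X : 𝔥}
    (hf : ∀ v ∈ X.support, f v ≠ []) : mapDomain f X ∈ H0 := fun _ hv => by
  obtain ⟨w, hw, rfl⟩ := Finset.mem_image.mp (mapDomain_support hv)
  exact hf w hw

theorem incFirst_ne_nil {s : List ℕ} (hs : s ≠ []) : incFirst s ≠ [] := by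
  cases s
  · exact absurd rfl hs
  · simp [incFirst]

theorem mapDomain_incFirst_mem_H0 {X : 𝔥} (hX : X ∈ H0) : mapDomain incFirst X ∈ H0 :=
  mapDomain_mem_H0 fun _ hv => incFirst_ne_nil (hX hv)

theorem shuffleStar_mem_H0 {s t : List ℕ} (hs : s ≠ []) (ht : t ≠ []) :
    shuffleStar s t ∈ H0 := by
  induction s, t using shuffleStar.induct with
  | case1 => exact absurd rfl hs
  | case2 => exact absurd rfl ht
  | case3 s b t =>
    rw [shuffleStar_zero_left]
    exact mapDomain_mem_H0 fun _ _ => List.cons_ne_nil _ _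
  | case4 a s t =>
    rw [shuffleStar_zero_right]
    exact mapDomain_mem_H0 fun _ _ => List.cons_ne_nil _ _
  | case5 a s b t ih₁ ih₂ =>
    rw [shuffleStar_succ_succ]
    exact add_mem (mapDomain_incFirst_mem_H0 (ih₁ (by simp) (by simp)))
      (mapDomain_incFirst_mem_H0 (ih₂ (by simp) (by simp)))

section Extension

variable {M : Type*} [AddCommMonoid M] [Module ℚ M]

theorem linearMap_ext_E {f g : 𝔥 →ₗ[ℚ] M} (h : ∀ s, f (E s) = g (E s)) : f = g :=
  lhom_ext' fun s => LinearMap.ext_ring (h s)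

theorem bilinear_ext_E {f g : 𝔥 →ₗ[ℚ] 𝔥 →ₗ[ℚ] M}
    (h : ∀ s t, f (E s) (E t) = g (E s) (E t)) : f = g :=
  linearMap_ext_E fun s => linearMap_ext_E (h s)

theorem linearMap_eqOn_H0 {f g : 𝔥 →ₗ[ℚ] M} (h : ∀ s ≠ [], f (E s) = g (E s))
    {X : 𝔥} (hX : X ∈ H0) : f X = g X := by
  rw [H0, supported_eq_span_single] at hX
  exact LinearMap.eqOn_span' (by rintro _ ⟨s, hs, rfl⟩; exact h s hs) hX

theorem bilinear_eqOn_H0 {f g : 𝔥 →ₗ[ℚ] 𝔥 →ₗ[ℚ] M}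
    (h : ∀ s ≠ [], ∀ t ≠ [], f (E s) (E t) = g (E s) (E t))
    {X Y : 𝔥} (hX : X ∈ H0) (hY : Y ∈ H0) : f X Y = g X Y :=
  linearMap_eqOn_H0 (f := f.flip Y) (g := g.flip Y)
    (fun s hs => linearMap_eqOn_H0 (h s hs) hY) hX

end Extension

noncomputable def shuffleStarBilin : 𝔥 →ₗ[ℚ] 𝔥 →ₗ[ℚ] 𝔥 :=
  linearCombination ℚ fun s => linearCombination ℚ (shuffleStar s)

theorem shuffleStarBilin_E_E (s t : List ℕ) : shuffleStarBilin (E s) (E t) = shuffleStar s t := by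
  simp [shuffleStarBilin, E]

theorem shuffleStarBilin_nil_left (Y : 𝔥) : shuffleStarBilin (E []) Y = Y :=
  LinearMap.congr_fun (f := shuffleStarBilin (E [])) (g := LinearMap.id)
    (linearMap_ext_E fun t => by
      rw [shuffleStarBilin_E_E, shuffleStar_nil_left, LinearMap.id_apply]) Y

theorem shuffleStarBilin_nil_right (X : 𝔥) : shuffleStarBilin X (E []) = X :=
  LinearMap.congr_fun (f := shuffleStarBilin.flip (E [])) (g := LinearMap.id)
    (linearMap_ext_E fun s => by
      rw [LinearMap.flip_apply, shuffleStarBilin_E_E, shuffleStar_nil_right, LinearMap.id_apply]) X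

theorem shuffleStarBilin_zero_left (X Y : 𝔥) :
    shuffleStarBilin (mapDomain (0 :: ·) X) Y = mapDomain (0 :: ·) (shuffleStarBilin X Y) :=
  LinearMap.congr_fun₂ (f := shuffleStarBilin ∘ₗ lmapDomain ℚ ℚ (0 :: ·))
    (g := shuffleStarBilin.compr₂ (lmapDomain ℚ ℚ (0 :: ·)))
    (bilinear_ext_E fun s t => by
      simp [mapDomain_E, shuffleStarBilin_E_E, shuffleStar_zero_left]) X Y

theorem shuffleStarBilin_zero_right (X Y : 𝔥) :
    shuffleStarBilin X (mapDomain (0 :: ·) Y) = mapDomain (0 :: ·) (shuffleStarBilin X Y) :=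
  LinearMap.congr_fun₂ (f := shuffleStarBilin.compl₂ (lmapDomain ℚ ℚ (0 :: ·)))
    (g := shuffleStarBilin.compr₂ (lmapDomain ℚ ℚ (0 :: ·)))
    (bilinear_ext_E fun s t => by
      simp [mapDomain_E, shuffleStarBilin_E_E, shuffleStar_zero_right]) X Y

theorem shuffleStarBilin_mem_H0 {X Y : 𝔥} (hX : X ∈ H0) (hY : Y ∈ H0) :
    shuffleStarBilin X Y ∈ H0 := by
  have h : shuffleStarBilin X Y [] = 0 :=
    bilinear_eqOn_H0 (f := shuffleStarBilin.compr₂ (lapply [])) (g := 0)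
      (fun s hs t ht => by
        simpa [shuffleStarBilin_E_E] using (mem_supported' ℚ _).mp (shuffleStar_mem_H0 hs ht) [])
      hX hY
  exact (mem_supported' ℚ _).mpr fun v hv => by simp_all

theorem shuffleStarBilin_incFirst {X Y : 𝔥} (hX : X ∈ H0) (hY : Y ∈ H0) :
    shuffleStarBilin (mapDomain incFirst X) (mapDomain incFirst Y) =
      mapDomain incFirst (shuffleStarBilin X (mapDomain incFirst Y))
      + mapDomain incFirst (shuffleStarBilin (mapDomain incFirst X) Y) :=
  bilinear_eqOn_H0 (f := (shuffleStarBilin ∘ₗ I).compl₂ I)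
    (g := (shuffleStarBilin.compl₂ I).compr₂ I + (shuffleStarBilin ∘ₗ I).compr₂ I)
    (fun s hs t ht => by
      simp [mapDomain_E, shuffleStarBilin_E_E, shuffleStar_incFirst hs ht]) hX hY

def tupleWeight (s : List ℕ) : ℕ := s.length + s.sum

theorem shuffleStarBilin_assoc (s t u : List ℕ) :
    shuffleStarBilin (shuffleStar s t) (E u) = shuffleStarBilin (E s) (shuffleStar t u) := by
  match s, t, u with
  | [], t, u => rw [shuffleStar_nil_left, shuffleStarBilin_nil_left, shuffleStarBilin_E_E]
  | a :: s, [], u => rw [shuffleStar_nil_right, shuffleStar_nil_left]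
  | a :: s, b :: t, [] =>
    rw [shuffleStar_nil_right, shuffleStarBilin_nil_right, shuffleStarBilin_E_E]
  | 0 :: s, b :: t, c :: u =>
    rw [shuffleStar_zero_left, shuffleStarBilin_zero_left,
      shuffleStarBilin_assoc s (b :: t) (c :: u), ← mapDomain_E, shuffleStarBilin_zero_left]
  | (a + 1) :: s, 0 :: t, c :: u =>
    rw [shuffleStar_zero_right, shuffleStarBilin_zero_left, shuffleStarBilin_assoc _ t (c :: u),
      ← shuffleStarBilin_zero_right, shuffleStar_zero_left]
  | (a + 1) :: s, (b + 1) :: t, 0 :: u =>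
    rw [← mapDomain_E, shuffleStarBilin_zero_right, shuffleStarBilin_assoc _ _ u,
      shuffleStar_zero_right, shuffleStarBilin_zero_right]
  | (a + 1) :: s, (b + 1) :: t, (c + 1) :: u =>
    have hE (n : ℕ) (v : List ℕ) : E ((n + 1) :: v) = I (E (n :: v)) :=
      (mapDomain_E incFirst (n :: v)).symm
    rw [← shuffleStarBilin_E_E, ← shuffleStarBilin_E_E, hE a s, hE b t, hE c u]
    refine LinearMap.assoc_of_rotaBaxter shuffleStarBilin I H0
      (fun _ hX _ hY => shuffleStarBilin_mem_H0 hX hY) (fun _ hX => mapDomain_incFirst_mem_H0 hX)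
      (fun _ hX _ hY => shuffleStarBilin_incFirst hX hY)
      (E_mem_H0 (List.cons_ne_nil _ _)) (E_mem_H0 (List.cons_ne_nil _ _))
      (E_mem_H0 (List.cons_ne_nil _ _)) ?_ ?_ ?_ <;>
    simp only [← hE, shuffleStarBilin_E_E]
    · exact shuffleStarBilin_assoc (a :: s) ((b + 1) :: t) ((c + 1) :: u)
    · exact shuffleStarBilin_assoc ((a + 1) :: s) (b :: t) ((c + 1) :: u)
    · exact shuffleStarBilin_assoc ((a + 1) :: s) ((b + 1) :: t) (c :: u)
  termination_by tupleWeight s + tupleWeight t + tupleWeight u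
  decreasing_by all_goals (simp only [tupleWeight, List.length_cons, List.sum_cons]; omega)

theorem shq_nil_left (w : List Bool) : shq [] w = single w 1 := by
  rw [shq]

theorem shq_nil_right (w : List Bool) : shq w [] = single w 1 := by
  cases w <;> rw [shq]

theorem shq_cons_cons (b : Bool) (v : List Bool) (c : Bool) (w : List Bool) :
    shq (b :: v) (c :: w) =
      mapDomain (b :: ·) (shq v (c :: w)) + mapDomain (c :: ·) (shq (b :: v) w) := by
  rw [shq]

def consIf (b : Bool) (s : List ℕ) : List ℕ := bif b then 0 :: s else s

theorem toTuple_cons (b : Bool) (w : List Bool) :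
    toTuple (b :: w) = incFirst (consIf b (toTuple w)) := by
  cases b <;> cases h : toTuple w <;> simp [toTuple, incFirst, consIf, h]

theorem mapDomain_toTuple_cons (b : Bool) (X : List Bool →₀ ℚ) :
    mapDomain toTuple (mapDomain (b :: ·) X) =
      mapDomain incFirst (mapDomain (consIf b) (mapDomain toTuple X)) := by
  simp only [← mapDomain_comp]
  exact congrArg (mapDomain · X) (funext fun w => toTuple_cons b w)

theorem shuffleStar_consIf_left (b : Bool) (s t : List ℕ) :
    shuffleStar (consIf b s) t = mapDomain (consIf b) (shuffleStar s t) := by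
  cases b
  · exact mapDomain_id.symm
  · exact shuffleStar_zero_left s t

theorem shuffleStar_consIf_right (b : Bool) (s t : List ℕ) :
    shuffleStar s (consIf b t) = mapDomain (consIf b) (shuffleStar s t) := by
  cases b
  · exact mapDomain_id.symm
  · exact shuffleStar_zero_right s t

def Admissible (w : List Bool) : Prop := w.getLast? ≠ some false

theorem Admissible.of_cons {b : Bool} {w : List Bool} (h : Admissible (b :: w)) : Admissible w := by
  cases w with
  | nil => simp [Admissible]
  | cons c w => rwa [Admissible, List.getLast?_cons_cons] at h

theorem toTuple_ne_nil {w : List Bool} (h : true ∈ w) : toTuple w ≠ [] := by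
  induction w with
  | nil => simp at h
  | cons b w ih =>
    rw [toTuple_cons]
    cases b
    · exact incFirst_ne_nil (ih (by simpa using h))
    · exact incFirst_ne_nil (List.cons_ne_nil _ _)

theorem consIf_toTuple_ne_nil {b : Bool} {w : List Bool} (h : Admissible (b :: w)) :
    consIf b (toTuple w) ≠ [] := by
  cases b
  · refine toTuple_ne_nil ?_
    cases w with
    | nil => simp [Admissible] at h
    | cons c w =>
      have hlast : (c :: w).getLast (List.cons_ne_nil _ _) = true := by
        simpa [Admissible, List.getLast?_cons_cons, List.getLast?_eq_some_getLast] using h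
      exact hlast ▸ List.getLast_mem _
  · exact List.cons_ne_nil _ _

theorem mapDomain_toTuple_shq {v w : List Bool} (hv : Admissible v) (hw : Admissible w) :
    mapDomain toTuple (shq v w) = shuffleStar (toTuple v) (toTuple w) := by
  induction v, w using shq.induct with
  | case1 w => rw [shq_nil_left, mapDomain_single, toTuple, shuffleStar_nil_left]; rfl
  | case2 b v => rw [shq_nil_right, mapDomain_single, toTuple, shuffleStar_nil_right]; rfl
  | case3 b v c w ih₁ ih₂ =>
    rw [shq_cons_cons, mapDomain_add, mapDomain_toTuple_cons, mapDomain_toTuple_cons,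
      ih₁ hv.of_cons hw, ih₂ hv hw.of_cons,
      ← shuffleStar_consIf_left, ← shuffleStar_consIf_right,
      toTuple_cons b v, toTuple_cons c w,
      shuffleStar_incFirst (consIf_toTuple_ne_nil hv) (consIf_toTuple_ne_nil hw)]

theorem admissible_wordOf' (s : List ℕ) : Admissible (wordOf' s) := by
  induction s with
  | nil => simp [Admissible, wordOf']
  | cons a s ih =>
    have hw : wordOf' (a :: s) = List.replicate (a - 1) false ++ true :: wordOf' s := by
      simp [wordOf']
    rw [Admissible, hw, List.getLast?_append, List.getLast?_cons]
    cases h : (wordOf' s).getLast? <;> simp_all [Admissible]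

theorem toTuple_replicate_append (n : ℕ) (w : List Bool) :
    toTuple (List.replicate n false ++ true :: w) = (n + 1) :: toTuple w := by
  induction n with
  | zero => rfl
  | succ n ih => rw [List.replicate_succ, List.cons_append, toTuple_cons, ih]; rfl

theorem toTuple_wordOf' {s : List ℕ} (hs : ∀ x ∈ s, 1 ≤ x) : toTuple (wordOf' s) = s := by
  induction s with
  | nil => rfl
  | cons a s ih =>
    have hw : wordOf' (a :: s) = List.replicate (a - 1) false ++ true :: wordOf' s := by
      simp [wordOf']
    rw [hw, toTuple_replicate_append, ih fun x hx => hs x (by simp [hx]),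
      Nat.sub_add_cancel (hs a (by simp))]

section Uniqueness

variable {m : 𝔥 →ₗ[ℚ] 𝔥 →ₗ[ℚ] 𝔥}

theorem GoodMul.zero_mul_eq (h : GoodMul m) {X : 𝔥} (hX : X ∈ H0) :
    m (E [0]) X = mapDomain (0 :: ·) X :=
  linearMap_eqOn_H0 (f := m (E [0])) (g := lmapDomain ℚ ℚ (0 :: ·))
    (fun s hs => by rw [h.2.2.2.1 s hs, lmapDomain_apply, mapDomain_E]) hX

theorem GoodMul.eq_shuffleStar (h : GoodMul m) {s t : List ℕ} (hs : s ≠ []) (ht : t ≠ []) :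
    m (E s) (E t) = shuffleStar s t := by
  obtain ⟨-, hcomm, hassoc, hzero, hRB⟩ := id h
  match s, t with
  | [0], t => rw [hzero t ht, shuffleStar_zero_left, shuffleStar_nil_left, mapDomain_E]
  | 0 :: b :: s, t =>
    calc m (E (0 :: b :: s)) (E t) = m (m (E [0]) (E (b :: s))) (E t) := by
          rw [hzero _ (List.cons_ne_nil _ _)]
      _ = m (E [0]) (m (E (b :: s)) (E t)) :=
          hassoc _ _ _ (List.cons_ne_nil _ _) (List.cons_ne_nil _ _) ht
      _ = mapDomain (0 :: ·) (shuffleStar (b :: s) t) := by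
          rw [h.eq_shuffleStar (List.cons_ne_nil _ _) ht,
            h.zero_mul_eq (shuffleStar_mem_H0 (List.cons_ne_nil _ _) ht)]
      _ = shuffleStar (0 :: b :: s) t := (shuffleStar_zero_left _ _).symm
  | (a + 1) :: s, [0] =>
    rw [hcomm _ _ hs ht, hzero _ hs, shuffleStar_zero_right, shuffleStar_nil_right, mapDomain_E]
  | (a + 1) :: s, 0 :: c :: t =>
    calc m (E ((a + 1) :: s)) (E (0 :: c :: t))
          = m (E ((a + 1) :: s)) (m (E [0]) (E (c :: t))) := by rw [hzero _ (List.cons_ne_nil _ _)]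
      _ = m (m (E [0]) (E ((a + 1) :: s))) (E (c :: t)) := by
          rw [← hassoc _ _ _ hs (List.cons_ne_nil _ _) (List.cons_ne_nil _ _),
            hcomm _ _ hs (List.cons_ne_nil _ _)]
      _ = m (E [0]) (m (E ((a + 1) :: s)) (E (c :: t))) :=
          hassoc _ _ _ (List.cons_ne_nil _ _) hs (List.cons_ne_nil _ _)
      _ = mapDomain (0 :: ·) (shuffleStar ((a + 1) :: s) (c :: t)) := by
          rw [h.eq_shuffleStar hs (List.cons_ne_nil _ _),
            h.zero_mul_eq (shuffleStar_mem_H0 hs (List.cons_ne_nil _ _))]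
      _ = shuffleStar ((a + 1) :: s) (0 :: c :: t) := (shuffleStar_zero_right _ _).symm
  | (a + 1) :: s, (b + 1) :: t =>
    calc m (E ((a + 1) :: s)) (E ((b + 1) :: t))
          = mapDomain incFirst (m (E (a :: s)) (E ((b + 1) :: t)))
            + mapDomain incFirst (m (E ((a + 1) :: s)) (E (b :: t))) := by
          simpa only [mapDomain_E, incFirst] using
            hRB (a :: s) (b :: t) (List.cons_ne_nil _ _) (List.cons_ne_nil _ _)
      _ = shuffleStar ((a + 1) :: s) ((b + 1) :: t) := by
          rw [h.eq_shuffleStar (List.cons_ne_nil _ _) (List.cons_ne_nil _ _),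
            h.eq_shuffleStar (List.cons_ne_nil _ _) (List.cons_ne_nil _ _), shuffleStar_succ_succ]
  termination_by tupleWeight s + tupleWeight t
  decreasing_by all_goals (simp only [tupleWeight, List.length_cons, List.sum_cons]; omega)

end Uniqueness

theorem goodMul_shuffleStarBilin : GoodMul shuffleStarBilin := by
  refine ⟨fun s t _ _ hs ht => ?_, fun s t _ _ => ?_, fun s t u _ _ _ => ?_, fun s _ => ?_,
    fun s t hs ht => ?_⟩
  · rw [shuffleStarBilin_E_E, mapDomain_toTuple_shq (admissible_wordOf' s) (admissible_wordOf' t),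
      toTuple_wordOf' hs, toTuple_wordOf' ht]
  · rw [shuffleStarBilin_E_E, shuffleStarBilin_E_E, shuffleStar_comm]
  · rw [shuffleStarBilin_E_E, shuffleStarBilin_E_E]
    exact shuffleStarBilin_assoc s t u
  · rw [shuffleStarBilin_E_E, shuffleStar_zero_left, shuffleStar_nil_left, mapDomain_E]
  · rw [mapDomain_E, mapDomain_E, shuffleStarBilin_E_E, shuffleStarBilin_E_E, shuffleStarBilin_E_E,
      shuffleStar_incFirst hs ht]

/-- The shuffle product of `ℌ≥1` extends uniquely to a commutative associative
product `ш*` on `ℌ≥0` with `[0] ш* [s⃗] = [0,s⃗]` and such that the shift operator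
`I([s⃗]) = [s⃗+e⃗₁]` is a Rota-Baxter operator of weight 0. -/
theorem shuffle_extension_exists_unique :
    (∃ mul : (List ℕ →₀ ℚ) →ₗ[ℚ] (List ℕ →₀ ℚ) →ₗ[ℚ] (List ℕ →₀ ℚ), GoodMul mul) ∧
    (∀ mul mul' : (List ℕ →₀ ℚ) →ₗ[ℚ] (List ℕ →₀ ℚ) →ₗ[ℚ] (List ℕ →₀ ℚ),
      GoodMul mul → GoodMul mul' →
      ∀ s t : List ℕ, s ≠ [] → t ≠ [] → mul (E s) (E t) = mul' (E s) (E t)) := by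
  refine ⟨⟨shuffleStarBilin, goodMul_shuffleStarBilin⟩, fun m m' hm hm' s t hs ht => ?_⟩
  rw [hm.eq_shuffleStar hs ht, hm'.eq_shuffleStar hs ht]
end

section
/- The Rota-Baxter algebra (ℌ≥0, ш*, I), where I adds 1 to the first entry of a tuple, is isomorphic as a nonunitary Rota-Baxter algebra to the free commutative nonunitary Rota-Baxter algebra of weight 0 on one generator, via the map sending x^{n₀}⊗x^{n₁}⊗⋯⊗x^{n_ℓ} to the tuple (0,…,0, 1, 0,…,0, 1, …, 1, 0,…,0) with n₀ initial zeros followed by blocks of the form 1 followed by nᵢ−1 zeros. -/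
/-- Plain (weight-0) shuffle of two lists, as a multiset of lists. -/
def shufN : List ℕ → List ℕ → Multiset (List ℕ)
  | [], l => {l}
  | a :: as, [] => {a :: as}
  | a :: as, b :: bs =>
      ((shufN as (b :: bs)).map (a :: ·)) + ((shufN (a :: as) bs).map (b :: ·))
  termination_by x y => x.length + y.length

/-- The weight-0 mixable shuffle product of `Ш(xℚ[x])⁰` on pure tensors:
`(x^{a}⊗𝔲)·(x^{b}⊗𝔳) = x^{a+b}⊗(𝔲 ш 𝔳)`, with pure tensors encoded as lists of
exponents. -/
noncomputable def mulW : List ℕ → List ℕ → (List ℕ →₀ ℚ)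
  | a :: u, b :: v =>
      ((shufN u v).map fun w => Finsupp.single ((a + b) :: w) (1 : ℚ)).sum
  | _, _ => 0

/-- The map on basis elements sending `x^{n₀}⊗x^{n₁}⊗⋯⊗x^{n_ℓ}` to the tuple with
`n₀` initial zeros followed by blocks `1, 0^{nᵢ−1}` (entries merging when `nᵢ = 0`). -/
def phiL : List ℕ → List ℕ
  | [] => []
  | [n] => List.replicate n 0
  | n :: rest => List.replicate n 0 ++ incFirst (phiL rest)

/-! The map `φ = phiL` turns multiplication by `x` into `[0] ш* ·` and `P_x` into `I`, and every
basis tensor is built from `x` by these two operations; its inverse reads a tuple from the left,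
a leading `0` multiplying by `x` and a leading `k + 1` applying `P_x`. On `ℌ≥0`, commutativity,
associativity, `[0] ш* s⃗ = [0, s⃗]` and the Rota-Baxter identity for `I` already determine
`E s ш* E t` by recursion on the first entries of `s` and `t`; `starMul` records this recursion as
a multiset of tuples. The mixable shuffle, transported by `φ`, obeys the same recursion, so the two
products agree on basis elements. -/

def IsBasisTensor (l : List ℕ) : Prop := l ≠ [] ∧ 1 ≤ l.getLastD 0

theorem isBasisTensor_singleton {n : ℕ} : IsBasisTensor [n] ↔ 1 ≤ n := by
  simp [IsBasisTensor]

theorem isBasisTensor_cons {a : ℕ} {l : List ℕ} (hl : l ≠ []) :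
    IsBasisTensor (a :: l) ↔ IsBasisTensor l := by
  obtain ⟨b, l, rfl⟩ := List.exists_cons_of_ne_nil hl
  simp [IsBasisTensor]

theorem IsBasisTensor.of_zero_cons {l : List ℕ} (h : IsBasisTensor (0 :: l)) :
    IsBasisTensor l := by
  rcases eq_or_ne l [] with rfl | hl
  · simp [isBasisTensor_singleton] at h
  · exact (isBasisTensor_cons hl).1 h

theorem IsBasisTensor.of_succ_cons {a : ℕ} {l : List ℕ} (h : IsBasisTensor ((a + 1) :: l)) :
    a = 0 ∧ l = [] ∨ IsBasisTensor (a :: l) := by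
  rcases eq_or_ne l [] with rfl | hl
  · rcases a with _ | a <;> simp [isBasisTensor_singleton]
  · exact .inr ((isBasisTensor_cons hl).2 ((isBasisTensor_cons hl).1 h))

@[simp]
theorem incFirst_eq_nil {l : List ℕ} : incFirst l = [] ↔ l = [] := by
  cases l <;> simp [incFirst]

theorem IsBasisTensor.incFirst {l : List ℕ} (h : IsBasisTensor l) :
    IsBasisTensor (incFirst l) := by
  match l, h with
  | [a], _ => simp [isBasisTensor_singleton, _root_.incFirst]
  | a :: b :: l, h => simpa [_root_.incFirst, isBasisTensor_cons] using h

theorem phiL_zero_cons {l : List ℕ} (hl : l ≠ []) : phiL (0 :: l) = incFirst (phiL l) := by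
  obtain ⟨a, l, rfl⟩ := List.exists_cons_of_ne_nil hl
  simp [phiL]

theorem phiL_succ_cons (m : ℕ) (l : List ℕ) : phiL ((m + 1) :: l) = 0 :: phiL (m :: l) := by
  cases l <;> simp [phiL, List.replicate_succ]

theorem phiL_incFirst {l : List ℕ} (hl : l ≠ []) : phiL (incFirst l) = 0 :: phiL l := by
  obtain ⟨a, l, rfl⟩ := List.exists_cons_of_ne_nil hl
  exact phiL_succ_cons a l

theorem phiL_ne_nil : ∀ {l : List ℕ}, IsBasisTensor l → phiL l ≠ []
  | [n], h => by simpa [phiL, isBasisTensor_singleton, Nat.one_le_iff_ne_zero] using h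
  | n :: a :: l, h => by
    have := phiL_ne_nil ((isBasisTensor_cons (List.cons_ne_nil a l)).1 h)
    simp [phiL, this]

-- `[]` goes to `[0]` so that `phiLInv [0] = incFirst [0] = [1]`.
def phiLInv : List ℕ → List ℕ
  | [] => [0]
  | 0 :: w => incFirst (phiLInv w)
  | (k + 1) :: w => 0 :: phiLInv (k :: w)
  termination_by s => s.sum + s.length
  decreasing_by all_goals (simp only [List.sum_cons, List.length_cons]; omega)

theorem phiLInv_ne_nil (s : List ℕ) : phiLInv s ≠ [] := by
  induction s using phiLInv.induct with
  | case1 => simp [phiLInv]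
  | case2 w ih => simpa [phiLInv] using ih
  | case3 k w _ => simp [phiLInv]

theorem phiLInv_incFirst {l : List ℕ} (hl : l ≠ []) : phiLInv (incFirst l) = 0 :: phiLInv l := by
  obtain ⟨a, l, rfl⟩ := List.exists_cons_of_ne_nil hl
  rw [incFirst, phiLInv]

theorem phiL_phiLInv (s : List ℕ) : phiL (phiLInv s) = s := by
  induction s using phiLInv.induct with
  | case1 => rw [phiLInv]; rfl
  | case2 w ih => rw [phiLInv, phiL_incFirst (phiLInv_ne_nil w), ih]
  | case3 k w ih => rw [phiLInv, phiL_zero_cons (phiLInv_ne_nil _), ih, incFirst]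

theorem isBasisTensor_phiLInv {s : List ℕ} (hs : s ≠ []) : IsBasisTensor (phiLInv s) := by
  induction s using phiLInv.induct with
  | case1 => exact absurd rfl hs
  | case2 w ih =>
    rcases eq_or_ne w [] with rfl | hw
    · simp [phiLInv, incFirst, isBasisTensor_singleton]
    · rw [phiLInv]; exact (ih hw).incFirst
  | case3 k w ih =>
    rw [phiLInv, isBasisTensor_cons (phiLInv_ne_nil _)]; exact ih (List.cons_ne_nil k w)

theorem phiLInv_phiL : ∀ {l : List ℕ}, IsBasisTensor l → phiLInv (phiL l) = l
  | 0 :: l, h => by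
    have hl := h.of_zero_cons
    rw [phiL_zero_cons hl.1, phiLInv_incFirst (phiL_ne_nil hl), phiLInv_phiL hl]
  | (m + 1) :: l, h => by
    rw [phiL_succ_cons, phiLInv]
    rcases h.of_succ_cons with ⟨rfl, rfl⟩ | hm
    · rw [show phiL [0] = [] from rfl, phiLInv]; rfl
    · rw [phiLInv_phiL hm, incFirst]
  termination_by l => l.sum + l.length

theorem bijOn_phiL : Set.BijOn phiL {l | IsBasisTensor l} {s | s ≠ []} :=
  Set.InvOn.bijOn ⟨fun _ hl => phiLInv_phiL hl, fun s _ => phiL_phiLInv s⟩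
    (fun _ hl => phiL_ne_nil hl) (fun _ hs => isBasisTensor_phiLInv hs)

-- The terms of `E s ш* E t`, computed by the recursion that the axioms of `GoodMul` force.
def starMul : List ℕ → List ℕ → Multiset (List ℕ)
  | [], _ => 0
  | _ :: _, [] => 0
  | [0], b :: t => {0 :: b :: t}
  | 0 :: s₁ :: s, t₁ :: t => (starMul (s₁ :: s) (t₁ :: t)).map (0 :: ·)
  | (a + 1) :: s, [0] => {0 :: (a + 1) :: s}
  | (a + 1) :: s, 0 :: t₁ :: t => (starMul ((a + 1) :: s) (t₁ :: t)).map (0 :: ·)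
  | (a + 1) :: s, (b + 1) :: t =>
      (starMul (a :: s) ((b + 1) :: t) + starMul ((a + 1) :: s) (b :: t)).map incFirst
  termination_by s t => s.sum + t.sum + s.length + t.length
  decreasing_by all_goals (simp only [List.sum_cons, List.length_cons]; omega)

theorem ne_nil_of_mem_starMul {s t w : List ℕ} (hw : w ∈ starMul s t) : w ≠ [] := by
  induction s, t using starMul.induct generalizing w <;>
    simp only [starMul, Multiset.mem_map, Multiset.mem_add, Multiset.mem_singleton,
      Multiset.notMem_zero] at hw <;> aesop

theorem starMul_zero_left {t : List ℕ} (ht : t ≠ []) : starMul [0] t = {0 :: t} := by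
  obtain ⟨b, t, rfl⟩ := List.exists_cons_of_ne_nil ht
  rw [starMul]

theorem starMul_zero_cons_left {s t : List ℕ} (hs : s ≠ []) (ht : t ≠ []) :
    starMul (0 :: s) t = (starMul s t).map (0 :: ·) := by
  obtain ⟨a, s, rfl⟩ := List.exists_cons_of_ne_nil hs
  obtain ⟨b, t, rfl⟩ := List.exists_cons_of_ne_nil ht
  rw [starMul]

theorem starMul_zero_right : ∀ {s : List ℕ}, s ≠ [] → starMul s [0] = {0 :: s}
  | [0], _ => by rw [starMul]
  | 0 :: a :: s, _ => by
    rw [starMul, starMul_zero_right (List.cons_ne_nil a s), Multiset.map_singleton]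
  | (a + 1) :: s, _ => by rw [starMul]

theorem starMul_zero_cons_right {t : List ℕ} (ht : t ≠ []) :
    ∀ {s : List ℕ}, s ≠ [] → starMul s (0 :: t) = (starMul s t).map (0 :: ·)
  | [0], _ => by rw [starMul_zero_left ht, starMul_zero_left (List.cons_ne_nil 0 t),
      Multiset.map_singleton]
  | 0 :: a :: s, _ => by
    rw [starMul_zero_cons_left (List.cons_ne_nil a s) (List.cons_ne_nil 0 t),
      starMul_zero_cons_right ht (List.cons_ne_nil a s),
      starMul_zero_cons_left (List.cons_ne_nil a s) ht]
  | (a + 1) :: s, _ => by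
    obtain ⟨b, t, rfl⟩ := List.exists_cons_of_ne_nil ht
    rw [starMul]

theorem starMul_incFirst_incFirst {s t : List ℕ} (hs : s ≠ []) (ht : t ≠ []) :
    starMul (incFirst s) (incFirst t) =
      (starMul s (incFirst t) + starMul (incFirst s) t).map incFirst := by
  obtain ⟨a, s, rfl⟩ := List.exists_cons_of_ne_nil hs
  obtain ⟨b, t, rfl⟩ := List.exists_cons_of_ne_nil ht
  simp only [incFirst]
  rw [starMul]

def mixShuffle : List ℕ → List ℕ → Multiset (List ℕ)
  | a :: u, b :: v => (shufN u v).map ((a + b) :: ·)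
  | _, _ => 0

theorem mulW_eq_sum_mixShuffle (u v : List ℕ) : mulW u v = ((mixShuffle u v).map E).sum := by
  match u, v with
  | a :: u, b :: v => simp only [mulW, mixShuffle, Multiset.map_map]; rfl
  | [], _ => rfl
  | _ :: _, [] => rfl

theorem ne_nil_of_mem_mixShuffle {u v w : List ℕ} (hw : w ∈ mixShuffle u v) : w ≠ [] := by
  match u, v with
  | a :: u, b :: v => obtain ⟨w, -, rfl⟩ := Multiset.mem_map.1 hw; exact List.cons_ne_nil _ _

theorem mixShuffle_succ_left (a : ℕ) (u : List ℕ) {v : List ℕ} (hv : v ≠ []) :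
    mixShuffle ((a + 1) :: u) v = (mixShuffle (a :: u) v).map incFirst := by
  obtain ⟨b, v, rfl⟩ := List.exists_cons_of_ne_nil hv
  simp only [mixShuffle, Multiset.map_map]
  exact Multiset.map_congr rfl fun w _ => by simp [incFirst, Nat.add_right_comm]

theorem mixShuffle_succ_right {u : List ℕ} (hu : u ≠ []) (b : ℕ) (v : List ℕ) :
    mixShuffle u ((b + 1) :: v) = (mixShuffle u (b :: v)).map incFirst := by
  obtain ⟨a, u, rfl⟩ := List.exists_cons_of_ne_nil hu
  simp only [mixShuffle, Multiset.map_map]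
  exact Multiset.map_congr rfl fun w _ => by simp [incFirst, Nat.add_assoc]

theorem mixShuffle_zero_left {v : List ℕ} (hv : v ≠ []) : mixShuffle [0] v = {v} := by
  obtain ⟨b, v, rfl⟩ := List.exists_cons_of_ne_nil hv
  simp [mixShuffle, shufN]

theorem mixShuffle_zero_right {u : List ℕ} (hu : u ≠ []) : mixShuffle u [0] = {u} := by
  obtain ⟨a, u, rfl⟩ := List.exists_cons_of_ne_nil hu
  cases u <;> simp [mixShuffle, shufN]

-- The Rota-Baxter identity of weight 0 for `P_x` on the mixable shuffle product.
theorem mixShuffle_zero_cons_zero_cons {u v : List ℕ} (hu : u ≠ []) (hv : v ≠ []) :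
    mixShuffle (0 :: u) (0 :: v) =
      (mixShuffle u (0 :: v) + mixShuffle (0 :: u) v).map (0 :: ·) := by
  obtain ⟨a, u, rfl⟩ := List.exists_cons_of_ne_nil hu
  obtain ⟨b, v, rfl⟩ := List.exists_cons_of_ne_nil hv
  simp only [mixShuffle, Nat.add_zero, Nat.zero_add]
  rw [shufN]

theorem starMul_phiL : ∀ {u v : List ℕ}, IsBasisTensor u → IsBasisTensor v →
    starMul (phiL u) (phiL v) = (mixShuffle u v).map phiL
  | (a + 1) :: u, v, hu, hv => by
    rw [phiL_succ_cons, mixShuffle_succ_left a u hv.1, Multiset.map_map]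
    rcases hu.of_succ_cons with ⟨rfl, rfl⟩ | ha
    · rw [show phiL [0] = [] from rfl, starMul_zero_left (phiL_ne_nil hv),
        mixShuffle_zero_left hv.1, Multiset.map_singleton, Function.comp_apply,
        phiL_incFirst hv.1]
    · rw [starMul_zero_cons_left (phiL_ne_nil ha) (phiL_ne_nil hv), starMul_phiL ha hv,
        Multiset.map_map]
      exact Multiset.map_congr rfl fun w hw =>
        (phiL_incFirst (ne_nil_of_mem_mixShuffle hw)).symm
  | u, (b + 1) :: v, hu, hv => by
    rw [phiL_succ_cons, mixShuffle_succ_right hu.1 b v, Multiset.map_map]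
    rcases hv.of_succ_cons with ⟨rfl, rfl⟩ | hb
    · rw [show phiL [0] = [] from rfl, starMul_zero_right (phiL_ne_nil hu),
        mixShuffle_zero_right hu.1, Multiset.map_singleton, Function.comp_apply,
        phiL_incFirst hu.1]
    · rw [starMul_zero_cons_right (phiL_ne_nil hb) (phiL_ne_nil hu), starMul_phiL hu hb,
        Multiset.map_map]
      exact Multiset.map_congr rfl fun w hw =>
        (phiL_incFirst (ne_nil_of_mem_mixShuffle hw)).symm
  | 0 :: u, 0 :: v, hu, hv => by
    have hu' := hu.of_zero_cons
    have hv' := hv.of_zero_cons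
    rw [phiL_zero_cons hu'.1, phiL_zero_cons hv'.1,
      starMul_incFirst_incFirst (phiL_ne_nil hu') (phiL_ne_nil hv'),
      ← phiL_zero_cons hu'.1, ← phiL_zero_cons hv'.1, starMul_phiL hu' hv, starMul_phiL hu hv',
      mixShuffle_zero_cons_zero_cons hu'.1 hv'.1, ← Multiset.map_add, Multiset.map_map,
      Multiset.map_map]
    exact Multiset.map_congr rfl fun w hw =>
      (phiL_zero_cons (by rcases Multiset.mem_add.1 hw with h | h <;>
        exact ne_nil_of_mem_mixShuffle h)).symm
  termination_by u v => u.sum + v.sum + u.length + v.length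

theorem mapDomain_sum_map_E (f : List ℕ → List ℕ) (M : Multiset (List ℕ)) :
    Finsupp.mapDomain f (M.map E).sum = ((M.map f).map E).sum := by
  rw [← Finsupp.mapDomain.addMonoidHom_apply, map_multiset_sum, Multiset.map_map,
    Multiset.map_map]
  exact congrArg _ (Multiset.map_congr rfl fun w _ => Finsupp.mapDomain_single)

namespace GoodMul

variable {mul : (List ℕ →₀ ℚ) →ₗ[ℚ] (List ℕ →₀ ℚ) →ₗ[ℚ] (List ℕ →₀ ℚ)} (hmul : GoodMul mul)
include hmul

theorem mul_E_zero_cons_left {s t : List ℕ} (hs : s ≠ []) (ht : t ≠ []) :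
    mul (E (0 :: s)) (E t) = mul (E [0]) (mul (E s) (E t)) := by
  rw [← hmul.2.2.2.1 s hs, hmul.2.2.1 _ _ _ (List.cons_ne_nil 0 []) hs ht]

theorem mul_E_zero_cons_right {s t : List ℕ} (hs : s ≠ []) (ht : t ≠ []) :
    mul (E s) (E (0 :: t)) = mul (E [0]) (mul (E s) (E t)) := by
  rw [hmul.2.1 _ _ hs (List.cons_ne_nil 0 t), hmul.mul_E_zero_cons_left ht hs,
    hmul.2.1 _ _ ht hs]

theorem mul_E_zero_sum {M : Multiset (List ℕ)} (hM : ∀ w ∈ M, w ≠ []) :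
    mul (E [0]) (M.map E).sum = ((M.map (0 :: ·)).map E).sum := by
  rw [map_multiset_sum, Multiset.map_map, Multiset.map_map]
  exact congrArg _ (Multiset.map_congr rfl fun w hw => hmul.2.2.2.1 w (hM w hw))

theorem mul_E_incFirst_incFirst {s t : List ℕ} (hs : s ≠ []) (ht : t ≠ []) :
    mul (E (incFirst s)) (E (incFirst t)) =
      Finsupp.mapDomain incFirst (mul (E s) (E (incFirst t)) + mul (E (incFirst s)) (E t)) := by
  have hE (l : List ℕ) : Finsupp.mapDomain incFirst (E l) = E (incFirst l) :=
    Finsupp.mapDomain_single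
  simpa only [hE, Finsupp.mapDomain_add] using hmul.2.2.2.2 s t hs ht

theorem mul_E_eq_sum_starMul : ∀ {s t : List ℕ}, s ≠ [] → t ≠ [] →
    mul (E s) (E t) = ((starMul s t).map E).sum
  | [0], t, _, ht => by
    rw [hmul.2.2.2.1 t ht, starMul_zero_left ht, Multiset.map_singleton, Multiset.sum_singleton]
  | 0 :: a :: s, t, _, ht => by
    rw [hmul.mul_E_zero_cons_left (List.cons_ne_nil a s) ht,
      mul_E_eq_sum_starMul (List.cons_ne_nil a s) ht,
      hmul.mul_E_zero_sum fun _ => ne_nil_of_mem_starMul,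
      starMul_zero_cons_left (List.cons_ne_nil a s) ht]
  | (a + 1) :: s, [0], hs, _ => by
    rw [hmul.2.1 _ _ hs (List.cons_ne_nil 0 []), hmul.2.2.2.1 _ hs, starMul_zero_right hs,
      Multiset.map_singleton, Multiset.sum_singleton]
  | (a + 1) :: s, 0 :: b :: t, hs, _ => by
    rw [hmul.mul_E_zero_cons_right hs (List.cons_ne_nil b t),
      mul_E_eq_sum_starMul hs (List.cons_ne_nil b t),
      hmul.mul_E_zero_sum fun _ => ne_nil_of_mem_starMul,
      starMul_zero_cons_right (List.cons_ne_nil b t) hs]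
  | (a + 1) :: s, (b + 1) :: t, _, _ => by
    have hs := List.cons_ne_nil a s
    have ht := List.cons_ne_nil b t
    rw [show (a + 1) :: s = incFirst (a :: s) from rfl,
      show (b + 1) :: t = incFirst (b :: t) from rfl,
      hmul.mul_E_incFirst_incFirst hs ht, starMul_incFirst_incFirst hs ht,
      mul_E_eq_sum_starMul hs (incFirst_eq_nil.not.2 ht),
      mul_E_eq_sum_starMul (incFirst_eq_nil.not.2 hs) ht,
      ← Multiset.sum_add, ← Multiset.map_add, mapDomain_sum_map_E]
  termination_by s t => s.sum + t.sum + s.length + t.length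
  decreasing_by all_goals (simp only [List.sum_cons, List.length_cons, incFirst]; omega)

end GoodMul

/-- `(ℌ≥0, ш*, I)` is isomorphic to the free commutative nonunitary Rota-Baxter
algebra `Ш(xℚ[x])⁰` of weight 0 on one generator via `φ`: for any product `ш*`
satisfying the characterization `GoodMul`, the basis map `φ` is a bijection from
the basis of `Ш(xℚ[x])⁰` (lists with last entry ≥ 1) onto the basis of `ℌ≥0`
(nonempty tuples), intertwines `P_x` with `I`, and intertwines the weight-0
mixable shuffle product with `ш*`. -/
theorem phi_isomorphism_free_RBA
    (mul : (List ℕ →₀ ℚ) →ₗ[ℚ] (List ℕ →₀ ℚ) →ₗ[ℚ] (List ℕ →₀ ℚ))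
    (hmul : GoodMul mul) :
    Set.BijOn phiL {l : List ℕ | l ≠ [] ∧ 1 ≤ l.getLastD 0} {l : List ℕ | l ≠ []} ∧
    (∀ l : List ℕ, l ≠ [] → 1 ≤ l.getLastD 0 →
      phiL (0 :: l) = incFirst (phiL l)) ∧
    (∀ u v : List ℕ, u ≠ [] → v ≠ [] → 1 ≤ u.getLastD 0 → 1 ≤ v.getLastD 0 →
      Finsupp.mapDomain phiL (mulW u v) = mul (E (phiL u)) (E (phiL v))) := by
  refine ⟨bijOn_phiL, fun l hl _ => phiL_zero_cons hl, fun u v hu hv hu₁ hv₁ => ?_⟩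
  have hu' : IsBasisTensor u := ⟨hu, hu₁⟩
  have hv' : IsBasisTensor v := ⟨hv, hv₁⟩
  rw [mulW_eq_sum_mixShuffle, mapDomain_sum_map_E, ← starMul_phiL hu' hv',
    hmul.mul_E_eq_sum_starMul (phiL_ne_nil hu') (phiL_ne_nil hv')]
end

section
/- For k ≥ 2, the exponential generating identity exp(Σ_{n≥1} (−1)^{n−1} ζ(nk) uⁿ/n) = 1 + Σ_{n≥1} ζ({k}ⁿ) uⁿ holds as an identity of formal power series in u, where ζ({k}ⁿ) = ζ(k,k,…,k) (n repetitions) and ζ(s₁,…,sₙ) = Σ_{m₁>⋯>mₙ≥1} 1/(m₁^{s₁}⋯mₙ^{sₙ}). -/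
/-- `ζ({k}ⁿ) = ζ(k,…,k)` (`n` repetitions):
`Σ_{m₁>⋯>mₙ≥1} 1/(m₁^k⋯mₙ^k)`, with value `1` for `n = 0`. -/
noncomputable def zetaRep (k n : ℕ) : ℝ :=
  ∑' v : {v : Fin n → ℕ // StrictAnti v ∧ ∀ i, 0 < v i},
    ∏ i : Fin n, (((v.1 i : ℝ)) ^ k)⁻¹

/-- The Riemann zeta value `ζ(s) = Σ_{m≥1} m^{−s}`. -/
noncomputable def zetaVal (s : ℕ) : ℝ := ∑' m : ℕ+, (((m : ℕ) : ℝ) ^ s)⁻¹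

/-- The formal power series `Σ_{n≥1} (−1)^{n−1} ζ(nk) uⁿ/n`. -/
noncomputable def Ak (k : ℕ) : PowerSeries ℝ :=
  PowerSeries.mk fun n => if n = 0 then 0 else (-1 : ℝ) ^ (n - 1) * zetaVal (n * k) / n

/-- The formal exponential `exp(F) = Σ_m F^m/m!` of a power series `F` with zero
constant term (coefficientwise, only finitely many terms contribute in each
degree). -/
noncomputable def formalExp (F : PowerSeries ℝ) : PowerSeries ℝ :=
  PowerSeries.mk fun N =>
    ∑ m ∈ Finset.range (N + 1), PowerSeries.coeff N (F ^ m) / (Nat.factorial m)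

/-!
For finitely many variables, Newton's identities `(n+1) eₙ₊₁ = Σ_{i+j=n} (-1)ⁱ pᵢ₊₁ eⱼ` relate the
elementary symmetric functions `eₙ` to the power sums `pᵢ`. Letting the variables `1⁻ᵏ, …, M⁻ᵏ`
exhaust all `m⁻ᵏ`, `eₙ` tends to `ζ({k}ⁿ)` (the sums over `n`-subsets converge absolutely since
`Σ_t ∏_{j∈t} |xⱼ| ≤ ∏ (1 + |xⱼ|) ≤ exp Σ |xⱼ|`) and `pᵢ` to `ζ(ik)`, so the identities survive
in the limit. For `E = Σ ζ({k}ⁿ) uⁿ` and `A = Σ (-1)ⁿ⁻¹ ζ(nk) uⁿ/n` they say exactly `E' = A' E`;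
`exp A` solves the same linear differential equation with the same constant term `1`, and such a
solution is unique coefficient by coefficient.
-/

open Finset PowerSeries Filter Topology

section Newton

variable {ι R : Type*} [CommRing R]

theorem MvPolynomial.aeval_esymm_finset (s : Finset ι) (f : ι → R) (n : ℕ) :
    MvPolynomial.aeval (fun j : s => f j) (MvPolynomial.esymm s R n) =
      ∑ t ∈ s.powersetCard n, ∏ j ∈ t, f j := by
  rw [MvPolynomial.aeval_esymm_eq_multiset_esymm, univ_eq_attach, ← esymm_map_val]
  exact congrArg (Multiset.esymm · n) (Multiset.attach_map_val' _ _)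

theorem MvPolynomial.aeval_psum_finset (s : Finset ι) (f : ι → R) (n : ℕ) :
    MvPolynomial.aeval (fun j : s => f j) (MvPolynomial.psum s R n) = ∑ j ∈ s, f j ^ n := by
  simp [MvPolynomial.psum, univ_eq_attach, sum_attach s (fun j => f j ^ n)]

theorem Finset.succ_mul_sum_powersetCard_prod (s : Finset ι) (f : ι → R) (n : ℕ) :
    (n + 1) * ∑ t ∈ s.powersetCard (n + 1), ∏ j ∈ t, f j =
      ∑ p ∈ antidiagonal n,
        (-1) ^ p.1 * (∑ j ∈ s, f j ^ (p.1 + 1)) * ∑ t ∈ s.powersetCard p.2, ∏ j ∈ t, f j := by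
  have newton := congrArg (MvPolynomial.aeval fun j : s => f j)
    (MvPolynomial.mul_esymm_eq_sum s R (n + 1))
  simp only [map_mul, map_sum, map_pow, map_neg, map_one, map_natCast,
    MvPolynomial.aeval_esymm_finset, MvPolynomial.aeval_psum_finset] at newton
  rw [Nat.cast_succ] at newton
  rw [newton, sum_filter, Nat.antidiagonal_succ', sum_cons, if_neg (lt_irrefl _), zero_add,
    sum_map, mul_sum, ← Nat.sum_antidiagonal_swap]
  refine sum_congr rfl fun p hp => ?_
  rw [HasAntidiagonal.mem_antidiagonal] at hp
  simp only [Function.Embedding.coe_prodMap, Function.Embedding.coeFn_mk, Prod.map_fst,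
    Prod.fst_swap, Function.Embedding.refl_apply, Prod.map_snd, Prod.snd_swap]
  rw [if_pos (by omega)]
  have hsign : (-1 : R) ^ (n + 1 + 1) * (-1) ^ p.2 = (-1) ^ p.1 := by
    rw [← pow_add, ← hp, show p.1 + p.2 + 1 + 1 + p.2 = p.1 + 2 * (p.2 + 1) by ring, pow_add,
      pow_mul]
    simp
  rw [← hsign]
  ring

end Newton

section InfiniteEsymm

variable {ι : Type*}

noncomputable def tsumEsymm (f : ι → ℝ) (n : ℕ) : ℝ :=
  ∑' t : {t : Finset ι // t.card = n}, ∏ j ∈ t.1, f j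

theorem tsumEsymm_zero (f : ι → ℝ) : tsumEsymm f 0 = 1 := by
  rw [tsumEsymm, tsum_eq_single ⟨∅, card_empty⟩ fun t ht => (ht (Subtype.ext
    (card_eq_zero.1 t.2))).elim]
  simp

theorem Summable.prod_finset {f : ι → ℝ} (hf : Summable f) :
    Summable fun t : Finset ι => ∏ j ∈ t, f j := by
  refine Summable.of_norm_bounded (g := fun t => ∏ j ∈ t, |f j|) ?_ fun t => by simp
  classical
  refine summable_of_sum_le (c := Real.exp (∑' j, |f j|))
    (fun t => prod_nonneg fun j _ => abs_nonneg _) fun u => ?_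
  set S := u.sup id
  calc ∑ t ∈ u, ∏ j ∈ t, |f j|
      ≤ ∑ t ∈ S.powerset, ∏ j ∈ t, |f j| :=
        sum_le_sum_of_subset_of_nonneg (fun t ht => mem_powerset.2 (le_sup (f := id) ht))
          fun t _ _ => prod_nonneg fun j _ => abs_nonneg _
    _ = ∏ j ∈ S, (1 + |f j|) := (prod_one_add S).symm
    _ ≤ ∏ j ∈ S, Real.exp |f j| :=
        prod_le_prod (fun j _ => by positivity) fun j _ => by linarith [Real.add_one_le_exp |f j|]
    _ = Real.exp (∑ j ∈ S, |f j|) := (Real.exp_sum S _).symm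
    _ ≤ Real.exp (∑' j, |f j|) :=
        Real.exp_le_exp.2 (hf.abs.sum_le_tsum _ fun j _ => abs_nonneg _)

theorem Summable.pow_succ {f : ι → ℝ} (hf : Summable f) (m : ℕ) :
    Summable fun j => f j ^ (m + 1) := by
  refine hf.abs.of_norm_bounded_eventually ?_
  filter_upwards [hf.tendsto_cofinite_zero.eventually (Metric.closedBall_mem_nhds 0 one_pos)]
    with j hj
  rw [dist_zero_right, Real.norm_eq_abs] at hj
  rw [Real.norm_eq_abs, abs_pow, _root_.pow_succ]
  exact mul_le_of_le_one_left (abs_nonneg _) (pow_le_one₀ (abs_nonneg _) hj)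

theorem tendsto_sum_powersetCard_prod {f : ι → ℝ} (hf : Summable f) (n : ℕ) :
    Tendsto (fun s : Finset ι => ∑ t ∈ s.powersetCard n, ∏ j ∈ t, f j) atTop
      (𝓝 (tsumEsymm f n)) := by
  have hsum : HasSum (Set.indicator {t : Finset ι | t.card = n} fun t => ∏ j ∈ t, f j)
      (tsumEsymm f n) := by
    have h : tsumEsymm f n = ∑' t, Set.indicator {t : Finset ι | t.card = n}
        (fun t => ∏ j ∈ t, f j) t :=
      _root_.tsum_subtype {t : Finset ι | t.card = n} fun t => ∏ j ∈ t, f j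
    exact h ▸ (hf.prod_finset.indicator _).hasSum
  have hpowerset : Tendsto (fun s : Finset ι => s.powerset) atTop atTop :=
    tendsto_atTop_finset_of_monotone (fun s s' h => powerset_mono.2 h)
      fun t => ⟨t, mem_powerset_self t⟩
  refine (hsum.comp hpowerset).congr fun s => ?_
  simp [powersetCard_eq_filter, sum_filter, Set.indicator_apply]

theorem succ_mul_tsumEsymm {f : ι → ℝ} (hf : Summable f) (n : ℕ) :
    (n + 1) * tsumEsymm f (n + 1) =
      ∑ p ∈ antidiagonal n, (-1) ^ p.1 * (∑' j, f j ^ (p.1 + 1)) * tsumEsymm f p.2 := by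
  refine tendsto_nhds_unique ((tendsto_sum_powersetCard_prod hf (n + 1)).const_mul _) ?_
  simp_rw [succ_mul_sum_powersetCard_prod]
  exact tendsto_finsetSum _ fun p _ =>
    ((hf.pow_succ p.1).hasSum.const_mul _).mul (tendsto_sum_powersetCard_prod hf p.2)

end InfiniteEsymm

namespace PowerSeries

theorem eq_of_derivative_eq_mul {A : Type*} [CommRing A] [IsAddTorsionFree A] {a f g : A⟦X⟧}
    (hf : d⁄dX A f = a * f) (hg : d⁄dX A g = a * g) (h0 : constantCoeff f = constantCoeff g) :
    f = g := by
  ext n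
  induction n using Nat.strong_induction_on with
  | _ n ih =>
    rcases n with _ | n
    · simpa using h0
    have hcoeff : coeff n (d⁄dX A f) = coeff n (d⁄dX A g) := by
      rw [hf, hg, coeff_mul, coeff_mul]
      refine sum_congr rfl fun p hp => ?_
      rw [ih p.2 (by rw [HasAntidiagonal.mem_antidiagonal] at hp; omega)]
    rw [coeff_derivative, coeff_derivative, ← Nat.cast_succ, mul_comm, ← nsmul_eq_mul, mul_comm,
      ← nsmul_eq_mul] at hcoeff
    exact (smul_right_inj n.succ_ne_zero).mp hcoeff

theorem coeff_pow_eq_zero_of_lt {R : Type*} [CommRing R] {F : R⟦X⟧} (hF : constantCoeff F = 0)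
    {n m : ℕ} (h : n < m) : coeff n (F ^ m) = 0 :=
  X_pow_dvd_iff.mp (pow_dvd_pow_of_dvd (X_dvd_iff.mpr hF) m) n h

end PowerSeries

theorem formalExp_eq_subst_exp {F : ℝ⟦X⟧} (hF : constantCoeff F = 0) :
    formalExp F = (exp ℝ).subst F := by
  ext n
  rw [formalExp, coeff_mk, coeff_subst' (HasSubst.of_constantCoeff_zero' hF),
    finsum_eq_sum_of_support_subset (s := range (n + 1))]
  · refine sum_congr rfl fun m _ => ?_
    simp [coeff_exp, div_eq_inv_mul]
  · intro m hm
    rw [Function.mem_support] at hm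
    rw [coe_range, Set.mem_Iio]
    by_contra! h
    exact hm (by rw [coeff_pow_eq_zero_of_lt hF (by omega), smul_zero])

theorem derivative_formalExp {F : ℝ⟦X⟧} (hF : constantCoeff F = 0) :
    d⁄dX ℝ (formalExp F) = d⁄dX ℝ F * formalExp F := by
  rw [formalExp_eq_subst_exp hF, derivative_subst (HasSubst.of_constantCoeff_zero' hF),
    derivative_exp, mul_comm]

theorem constantCoeff_formalExp (F : ℝ⟦X⟧) : constantCoeff (formalExp F) = 1 := by
  rw [← coeff_zero_eq_constantCoeff_apply, formalExp, coeff_mk]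
  simp

theorem mk_tsumEsymm_eq_formalExp {ι : Type*} {f : ι → ℝ} (hf : Summable f) {F : ℝ⟦X⟧}
    (hF0 : constantCoeff F = 0)
    (hF : d⁄dX ℝ F = PowerSeries.mk fun n => (-1) ^ n * ∑' j, f j ^ (n + 1)) :
    PowerSeries.mk (tsumEsymm f) = formalExp F := by
  refine eq_of_derivative_eq_mul (a := d⁄dX ℝ F) ?_ (derivative_formalExp hF0) ?_
  · ext n
    rw [coeff_derivative, coeff_mk, mul_comm, succ_mul_tsumEsymm hf, hF, coeff_mul]
    simp
  · rw [constantCoeff_formalExp, ← coeff_zero_eq_constantCoeff_apply, coeff_mk, tsumEsymm_zero]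

section StrictAnti

variable {α : Type*} [LinearOrder α] {n : ℕ}

theorem range_orderEmbOfFin_comp_rev (t : Finset α) (ht : t.card = n) :
    Set.range (fun i : Fin n => t.orderEmbOfFin ht i.rev) = t := by
  rw [← range_orderEmbOfFin t ht]
  exact Fin.revPerm.surjective.range_comp _

def strictAntiEquivFinset : {v : Fin n → α // StrictAnti v} ≃ {t : Finset α // t.card = n} where
  toFun v := ⟨univ.image v.1, by rw [card_image_of_injective _ v.2.injective, card_fin]⟩
  invFun t := ⟨fun i => t.1.orderEmbOfFin t.2 i.rev,
    fun _ _ h => (t.1.orderEmbOfFin t.2).strictMono (Fin.rev_lt_rev.2 h)⟩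
  left_inv v := Subtype.ext <| (StrictAnti.range_inj
    (fun _ _ h => (orderEmbOfFin _ _).strictMono (Fin.rev_lt_rev.2 h)) v.2).1 <| by
      rw [range_orderEmbOfFin_comp_rev, coe_image, coe_univ, Set.image_univ]
  right_inv t := Subtype.ext <| coe_injective <| by
    rw [coe_image, coe_univ, Set.image_univ, range_orderEmbOfFin_comp_rev]

theorem prod_strictAntiEquivFinset {M : Type*} [CommMonoid M] (f : α → M)
    (v : {v : Fin n → α // StrictAnti v}) :
    ∏ j ∈ (strictAntiEquivFinset v).1, f j = ∏ i, f (v.1 i) :=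
  prod_image v.2.injective.injOn

end StrictAnti

theorem zetaRep_eq_tsumEsymm {k : ℕ} (hk : k ≠ 0) (n : ℕ) :
    zetaRep k n = tsumEsymm (fun j : ℕ => ((j : ℝ) ^ k)⁻¹) n := by
  rw [tsumEsymm, ← strictAntiEquivFinset.tsum_eq fun t : {t : Finset ℕ // t.card = n} =>
    ∏ j ∈ t.1, ((j : ℝ) ^ k)⁻¹]
  simp_rw [prod_strictAntiEquivFinset]
  -- `(0 ^ k)⁻¹ = 0`, so tuples with a zero entry contribute nothing.
  rw [zetaRep, ← (Equiv.subtypeSubtypeEquivSubtypeInter StrictAnti fun v : Fin n → ℕ =>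
    ∀ i, 0 < v i).tsum_eq fun v => ∏ i, ((v.1 i : ℝ) ^ k)⁻¹]
  refine tsum_subtype_eq_of_support_subset (s := {v | ∀ i, 0 < v.1 i})
    (f := fun v : {v : Fin n → ℕ // StrictAnti v} => ∏ i, ((v.1 i : ℝ) ^ k)⁻¹) fun v hv i =>
      Nat.pos_of_ne_zero fun hi => hv (prod_eq_zero (mem_univ i) (by simp [hi, hk]))

theorem zetaVal_eq_tsum {s : ℕ} (hs : s ≠ 0) : zetaVal s = ∑' j : ℕ, ((j : ℝ) ^ s)⁻¹ := by
  refine PNat.coe_injective.tsum_eq (f := fun j : ℕ => ((j : ℝ) ^ s)⁻¹) fun j hj =>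
    ⟨⟨j, Nat.pos_of_ne_zero fun h => hj ?_⟩, rfl⟩
  simp [h, hs]

theorem constantCoeff_Ak (k : ℕ) : constantCoeff (Ak k) = 0 := by
  rw [← coeff_zero_eq_constantCoeff_apply, Ak, coeff_mk, if_pos rfl]

theorem derivative_Ak (k : ℕ) :
    d⁄dX ℝ (Ak k) = PowerSeries.mk fun n => (-1) ^ n * zetaVal ((n + 1) * k) := by
  ext n
  rw [coeff_derivative, Ak, coeff_mk, coeff_mk, if_neg n.succ_ne_zero, Nat.add_sub_cancel]
  push_cast
  field_simp

/-- For `k ≥ 2`, `exp(Σ_{n≥1} (−1)^{n−1} ζ(nk) uⁿ/n) = 1 + Σ_{n≥1} ζ({k}ⁿ) uⁿ`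
as formal power series in `u`. -/
theorem exp_zeta_generating_identity (k : ℕ) (hk : 2 ≤ k) :
    formalExp (Ak k) = PowerSeries.mk fun n => if n = 0 then (1 : ℝ) else zetaRep k n := by
  have hk0 : k ≠ 0 := by omega
  have hzetaRep : (fun n => if n = 0 then (1 : ℝ) else zetaRep k n) =
      tsumEsymm (fun j : ℕ => ((j : ℝ) ^ k)⁻¹) := by
    funext n
    split_ifs with hn
    · rw [hn, tsumEsymm_zero]
    · exact zetaRep_eq_tsumEsymm hk0 n
  have hpow (n : ℕ) : ∑' j : ℕ, (((j : ℝ) ^ k)⁻¹) ^ (n + 1) = zetaVal ((n + 1) * k) := by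
    simp_rw [inv_pow, ← pow_mul, mul_comm k]
    exact (zetaVal_eq_tsum (by positivity)).symm
  rw [hzetaRep, mk_tsumEsymm_eq_formalExp (Real.summable_nat_pow_inv.2 hk) (constantCoeff_Ak k)]
  simp_rw [derivative_Ak, hpow]
end
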